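/- With A₁ = A₂ = B₁ = 1, B₂ = -1 and eigenfunctions φⱼ = Aⱼ e^{-iX/(2λⱼ) - iλⱼT}, ψⱼ = Bⱼ e^{iX/(2λⱼ) + iλⱼT}, the one-fold Darboux formula q⁽¹⁾ = 2iφ₁φ₂(λ₁-λ₂)/(ψ₂φ₁ - ψ₁φ₂) simplifies to the closed form q⁽¹⁾ = -i(λ₁-λ₂)·e^{-i(λ₁+λ₂)X/(2λ₁λ₂) - i(λ₁+λ₂)T}·sech( i(λ₁-λ₂)X/(2λ₁λ₂) - i(λ₁-λ₂)T ). -/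

import Mathlib

open Complex

noncomputable def csech (z : ℂ) : ℂ := 2 / (Complex.exp z + Complex.exp (-z))

/-!
Both eigenfunctions are exponentials of a single phase `θ(λ) = -iX/(2λ) - iλT`, with
`φⱼ = e^{θ(λⱼ)}` and `ψⱼ = ±e^{-θ(λⱼ)}`. The Darboux quotient then only involves
`e^{θ₁ + θ₂}` in the numerator and `-(e^{θ₁ - θ₂} + e^{-(θ₁ - θ₂)})` in the denominator, and the
closed form is obtained by computing `θ₁ ± θ₂` explicitly.
-/

noncomputable def phase (lam : ℂ) (X T : ℝ) : ℂ := -(I * X) / (2 * lam) - I * lam * T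

theorem phase_add_phase {lam₁ lam₂ : ℂ} (h1 : lam₁ ≠ 0) (h2 : lam₂ ≠ 0) (X T : ℝ) :
    phase lam₁ X T + phase lam₂ X T
      = -(I * (lam₁ + lam₂) * X) / (2 * lam₁ * lam₂) - I * (lam₁ + lam₂) * T := by
  unfold phase
  field_simp
  ring

theorem phase_sub_phase {lam₁ lam₂ : ℂ} (h1 : lam₁ ≠ 0) (h2 : lam₂ ≠ 0) (X T : ℝ) :
    phase lam₁ X T - phase lam₂ X T
      = I * (lam₁ - lam₂) * X / (2 * lam₁ * lam₂) - I * (lam₁ - lam₂) * T := by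
  unfold phase
  field_simp
  ring

theorem exp_neg_phase (lam : ℂ) (X T : ℝ) :
    exp (-phase lam X T) = exp ((I * X) / (2 * lam) + I * lam * T) := by
  unfold phase
  congr 1
  ring

theorem darboux_quotient_eq_csech (θ₁ θ₂ c : ℂ) :
    2 * I * exp θ₁ * exp θ₂ * c / (-exp (-θ₂) * exp θ₁ - exp (-θ₁) * exp θ₂)
      = -I * c * exp (θ₁ + θ₂) * csech (θ₁ - θ₂) := by
  have hden : -exp (-θ₂) * exp θ₁ - exp (-θ₁) * exp θ₂
      = -(exp (θ₁ - θ₂) + exp (-(θ₁ - θ₂))) := by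
    rw [neg_mul, ← exp_add, ← exp_add, neg_sub]
    ring_nf
  rw [hden, div_neg, csech, exp_add]
  ring

theorem one_soliton_closed_form_general (lam₁ lam₂ : ℂ) (h1 : lam₁ ≠ 0) (h2 : lam₂ ≠ 0)
    (X T : ℝ)
    (φ₁ ψ₁ φ₂ ψ₂ : ℂ)
    (hφ₁ : φ₁ = Complex.exp (-(I * X) / (2 * lam₁) - I * lam₁ * T))
    (hψ₁ : ψ₁ = Complex.exp ((I * X) / (2 * lam₁) + I * lam₁ * T))
    (hφ₂ : φ₂ = Complex.exp (-(I * X) / (2 * lam₂) - I * lam₂ * T))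
    (hψ₂ : ψ₂ = -Complex.exp ((I * X) / (2 * lam₂) + I * lam₂ * T)) :
    2 * I * φ₁ * φ₂ * (lam₁ - lam₂) / (ψ₂ * φ₁ - ψ₁ * φ₂)
      = -I * (lam₁ - lam₂)
        * Complex.exp (-(I * (lam₁ + lam₂) * X) / (2 * lam₁ * lam₂) - I * (lam₁ + lam₂) * T)
        * csech (I * (lam₁ - lam₂) * X / (2 * lam₁ * lam₂) - I * (lam₁ - lam₂) * T) := by
  subst hφ₁ hψ₁ hφ₂ hψ₂
  rw [← phase_add_phase h1 h2, ← phase_sub_phase h1 h2, ← exp_neg_phase, ← exp_neg_phase]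
  exact darboux_quotient_eq_csech (phase lam₁ X T) (phase lam₂ X T) (lam₁ - lam₂)

theorem one_soliton_closed_form (lam₁ lam₂ : ℂ) (h1 : lam₁ ≠ 0) (h2 : lam₂ ≠ 0)
    (hne : lam₁ ≠ lam₂) (X T : ℝ)
    (φ₁ ψ₁ φ₂ ψ₂ : ℂ)
    (hφ₁ : φ₁ = Complex.exp (-(I * X) / (2 * lam₁) - I * lam₁ * T))
    (hψ₁ : ψ₁ = Complex.exp ((I * X) / (2 * lam₁) + I * lam₁ * T))
    (hφ₂ : φ₂ = Complex.exp (-(I * X) / (2 * lam₂) - I * lam₂ * T))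
    (hψ₂ : ψ₂ = -Complex.exp ((I * X) / (2 * lam₂) + I * lam₂ * T))
    (hden : ψ₂ * φ₁ - ψ₁ * φ₂ ≠ 0)
    (hsech : Complex.exp (I * (lam₁ - lam₂) * X / (2 * lam₁ * lam₂) - I * (lam₁ - lam₂) * T)
      + Complex.exp (-(I * (lam₁ - lam₂) * X / (2 * lam₁ * lam₂) - I * (lam₁ - lam₂) * T)) ≠ 0) :
    2 * I * φ₁ * φ₂ * (lam₁ - lam₂) / (ψ₂ * φ₁ - ψ₁ * φ₂)
      = -I * (lam₁ - lam₂)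
        * Complex.exp (-(I * (lam₁ + lam₂) * X) / (2 * lam₁ * lam₂) - I * (lam₁ + lam₂) * T)
        * csech (I * (lam₁ - lam₂) * X / (2 * lam₁ * lam₂) - I * (lam₁ - lam₂) * T) :=
  one_soliton_closed_form_general lam₁ lam₂ h1 h2 X T φ₁ ψ₁ φ₂ ψ₂ hφ₁ hψ₁ hφ₂ hψ₂
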